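/- Suppose there is a real number A such that Σ_{s=1}^S (p_s.eval (λ_ℓ))² = A for every eigenvalue index ℓ : Fin N. Then the dictionary atoms form a tight frame: for every y ∈ ℝ^N, Σ_{n=1}^N Σ_{s=1}^S ⟨y, d_{s,n}⟩² = A · ‖y‖². -/

import Mathlib

open Polynomial Matrix

/-!
Each subdictionary `D_s = p_s(L)` is symmetric, so `∑ₙ ∑ₛ ⟨y, d_{s,n}⟩² = ⟨y, (∑ₛ D_s D_sᵀ) y⟩`
and `∑ₛ D_s D_sᵀ = q(L)` for `q = ∑ₛ p_s²`. By the functional calculus `q(L)` only depends on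
`q` restricted to the spectrum of `L`, where `q` is the constant `A`; hence `q(L) = A • 1`.
-/

namespace Matrix

variable {m n : Type*} [Fintype n]

theorem vecMul_dotProduct_vecMul {R : Type*} [CommRing R] [Fintype m] (M : Matrix m n R)
    (y : m → R) : (y ᵥ* M) ⬝ᵥ (y ᵥ* M) = y ⬝ᵥ ((M * Mᵀ) *ᵥ y) := by
  rw [← mulVec_mulVec, dotProduct_mulVec, mulVec_transpose]

variable {𝕜 : Type*} [RCLike 𝕜] [DecidableEq n] {A : Matrix n n 𝕜}

theorem IsHermitian.aeval (hA : A.IsHermitian) (q : ℝ[X]) :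
    (Polynomial.aeval A q).IsHermitian := by
  rw [← cfc_polynomial q A hA]
  exact cfc_predicate _ A

theorem IsHermitian.aeval_eq_algebraMap_of_eval_eigenvalues (hA : A.IsHermitian) {q : ℝ[X]}
    {c : ℝ} (h : ∀ i, q.eval (hA.eigenvalues i) = c) :
    Polynomial.aeval A q = algebraMap ℝ _ c := by
  rw [← cfc_polynomial q A hA, ← cfc_const c A hA]
  refine cfc_congr ?_
  rw [hA.spectrum_real_eq_range_eigenvalues]
  rintro _ ⟨i, rfl⟩
  exact h i

end Matrix

theorem polynomial_dictionary_tight_frame_general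
    (N S : ℕ)
    (L : Matrix (Fin N) (Fin N) ℝ) (hL : L.IsHermitian)
    (p : Fin S → Polynomial ℝ) (A : ℝ)
    (hA : ∀ ℓ : Fin N, ∑ s : Fin S, ((p s).eval (hL.eigenvalues ℓ)) ^ 2 = A)
    (y : Fin N → ℝ) :
    ∑ n : Fin N, ∑ s : Fin S,
        (∑ i : Fin N, y i * (Polynomial.aeval L (p s)) i n) ^ 2 =
      A * ∑ i : Fin N, (y i) ^ 2 := by
  have hsymm (s : Fin S) : (aeval L (p s))ᵀ = aeval L (p s) :=
    (hL.aeval (p s)).eq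
  have hsum : aeval L (∑ s, p s ^ 2) = algebraMap ℝ _ A :=
    hL.aeval_eq_algebraMap_of_eval_eigenvalues fun ℓ => by
      simpa only [eval_finsetSum, eval_pow] using hA ℓ
  calc ∑ n, ∑ s, (∑ i, y i * aeval L (p s) i n) ^ 2
      = ∑ s, (y ᵥ* aeval L (p s)) ⬝ᵥ (y ᵥ* aeval L (p s)) := by
        rw [Finset.sum_comm]; simp only [dotProduct, sq]; rfl
    _ = y ⬝ᵥ (aeval L (∑ s, p s ^ 2) *ᵥ y) := by
        simp only [vecMul_dotProduct_vecMul, hsymm, map_sum, sq, map_mul, sum_mulVec,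
          dotProduct_sum]
    _ = A * ∑ i, y i ^ 2 := by
        rw [hsum, Algebra.algebraMap_eq_smul_one, smul_mulVec, one_mulVec, dotProduct_smul,
          smul_eq_mul, dotProduct]
        simp only [sq]

/-- Tight frame condition: if `Σ_s (p_s(λ_ℓ))² = A` for every eigenvalue index
`ℓ`, then the dictionary atoms form a tight frame with frame bound `A`. -/
theorem polynomial_dictionary_tight_frame
    (N S : ℕ) (hN : 0 < N) (hS : 1 ≤ S)
    (L : Matrix (Fin N) (Fin N) ℝ) (hL : L.IsHermitian)
    (p : Fin S → Polynomial ℝ) (A : ℝ)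
    (hA : ∀ ℓ : Fin N, ∑ s : Fin S, ((p s).eval (hL.eigenvalues ℓ)) ^ 2 = A)
    (y : Fin N → ℝ) :
    ∑ n : Fin N, ∑ s : Fin S,
        (∑ i : Fin N, y i * (Polynomial.aeval L (p s)) i n) ^ 2 =
      A * ∑ i : Fin N, (y i) ^ 2 :=
  polynomial_dictionary_tight_frame_general N S L hL p A hA y
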